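/- arXiv:1611.02407 — 4 statements merged into one kernel-verified Lean document; each statement's English description precedes it below -/
import Mathlib

section
/- Let μ¹, μ² ∈ ℝ² with μ2¹ ≥ 0, μ1² ≥ 0. If there exists θ = (θ1,θ2) with θ1 > 0, θ2 > 0 such that ⟨μ¹,θ⟩ < 0 and ⟨μ²,θ⟩ < 0, then μ1¹ < 0, μ2² < 0, and μ1¹·μ2² − μ2¹·μ1² > 0. -/
theorem stmt5 (μ11 μ21 μ12 μ22 : ℝ)
    (h21 : 0 ≤ μ21) (h12 : 0 ≤ μ12)
    (θ1 θ2 : ℝ) (hθ1 : 0 < θ1) (hθ2 : 0 < θ2)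
    (h1 : μ11 * θ1 + μ21 * θ2 < 0) (h2 : μ12 * θ1 + μ22 * θ2 < 0) :
    μ11 < 0 ∧ μ22 < 0 ∧ μ11 * μ22 - μ21 * μ12 > 0 := by
  refine ⟨?_, ?_, ?_⟩
  · nlinarith [mul_nonneg h21 hθ2.le]
  · nlinarith [mul_nonneg h12 hθ1.le]
  · nlinarith [mul_pos hθ1 hθ2, mul_nonneg h21 hθ2.le, mul_nonneg h12 hθ1.le]
end

section
/- Let P be an irreducible, aperiodic, positive recurrent transition probability matrix on a countable state space S with stationary distribution π. Suppose there exist a function v : S → [1,∞), constants c ∈ (0,1), b > 0, and a finite set K ⊆ S such that (Pv)(x) − v(x) ≤ −c·v(x) + b·1_K(x) for all x ∈ S. Then π(v) := Σ_x π(x) v(x) ≤ b/c. -/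
/-! Pre-multiplying the drift inequality by `π` would give `π v ≤ (1 - c) π v + b π(K)`, but this
needs `π v < ∞`. So truncate: `w = min v N` is bounded, hence `π (P w) = π w` by stationarity, and
`P w ≤ w - c · v · 1{v ≤ N} + b · 1_K` pointwise (use the drift where `v ≤ N`, and `P w ≤ N = w`
elsewhere). Integrating gives `c · π(v · 1{v ≤ N}) ≤ b · π(K) ≤ b` uniformly in `N`. -/

theorem Summable.mul_of_nonneg_of_le {S : Type*} {f w : S → ℝ} {N : ℝ} (hf : Summable f)
    (hf0 : ∀ x, 0 ≤ f x) (hw0 : ∀ x, 0 ≤ w x) (hwN : ∀ x, w x ≤ N) :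
    Summable fun x => f x * w x :=
  .of_nonneg_of_le (fun x => mul_nonneg (hf0 x) (hw0 x))
    (fun x => mul_le_mul_of_nonneg_left (hwN x) (hf0 x)) (hf.mul_right N)

theorem HasSum.tsum_mul_le_of_le {S : Type*} {f w : S → ℝ} {a N : ℝ} (hf : HasSum f a)
    (hf0 : ∀ x, 0 ≤ f x) (hw0 : ∀ x, 0 ≤ w x) (hwN : ∀ x, w x ≤ N) :
    ∑' x, f x * w x ≤ a * N := by
  calc ∑' x, f x * w x ≤ ∑' x, f x * N :=
        (hf.summable.mul_of_nonneg_of_le hf0 hw0 hwN).tsum_le_tsum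
          (fun x => mul_le_mul_of_nonneg_left (hwN x) (hf0 x)) (hf.summable.mul_right N)
    _ = a * N := by rw [tsum_mul_right, hf.tsum_eq]

section StationaryDrift

variable {S : Type*} {P : S → S → ℝ} {π : S → ℝ}

theorem tsum_mul_tsum_kernel_eq_of_bounded (hP0 : ∀ x y, 0 ≤ P x y)
    (hP1 : ∀ x, HasSum (P x) 1) (hπ0 : ∀ x, 0 ≤ π x) (hπ : Summable π)
    (hstat : ∀ y, ∑' x, π x * P x y = π y) {w : S → ℝ} {N : ℝ} (hw0 : ∀ x, 0 ≤ w x)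
    (hwN : ∀ x, w x ≤ N) :
    ∑' x, π x * ∑' y, P x y * w y = ∑' y, π y * w y := by
  have hrow (x : S) : Summable fun y => P x y * w y :=
    (hP1 x).summable.mul_of_nonneg_of_le (hP0 x) hw0 hwN
  have hjoint : Summable (Function.uncurry fun x y => π x * (P x y * w y)) := by
    refine (summable_prod_of_nonneg fun p => ?_).2 ⟨fun x => (hrow x).mul_left (π x), ?_⟩
    · exact mul_nonneg (hπ0 _) (mul_nonneg (hP0 _ _) (hw0 _))
    · show Summable fun x => ∑' y, π x * (P x y * w y)
      simp_rw [tsum_mul_left]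
      refine hπ.mul_of_nonneg_of_le (N := N) hπ0
        (fun x => tsum_nonneg fun y => mul_nonneg (hP0 x y) (hw0 y)) (fun x => ?_)
      simpa using (hP1 x).tsum_mul_le_of_le (hP0 x) hw0 hwN
  calc ∑' x, π x * ∑' y, P x y * w y = ∑' x, ∑' y, π x * (P x y * w y) := by
        simp_rw [tsum_mul_left]
    _ = ∑' y, ∑' x, π x * (P x y * w y) := hjoint.tsum_comm.symm
    _ = ∑' y, π y * w y := by
        congr 1 with y
        simp_rw [← hstat y, ← tsum_mul_right, mul_assoc]

variable {v r : S → ℝ} {c : ℝ}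

theorem tsum_kernel_mul_min_le (hP0 : ∀ x y, 0 ≤ P x y) (hP1 : ∀ x, HasSum (P x) 1)
    (hv0 : ∀ x, 0 ≤ v x) (hr0 : ∀ x, 0 ≤ r x) (hPv : ∀ x, Summable fun y => P x y * v y)
    (hdrift : ∀ x, (∑' y, P x y * v y) - v x ≤ -c * v x + r x) {N : ℝ} (hN : 0 ≤ N) (x : S) :
    ∑' y, P x y * min (v y) N ≤ min (v x) N - c * {x | v x ≤ N}.indicator v x + r x := by
  have hmin0 (y : S) : 0 ≤ min (v y) N := le_min (hv0 y) hN
  by_cases hx : v x ≤ N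
  · have hPmin : ∑' y, P x y * min (v y) N ≤ ∑' y, P x y * v y :=
      ((hP1 x).summable.mul_of_nonneg_of_le (hP0 x) hmin0 fun _ => min_le_right _ _).tsum_le_tsum
        (fun y => mul_le_mul_of_nonneg_left (min_le_left _ _) (hP0 x y)) (hPv x)
    rw [min_eq_left hx, Set.indicator_of_mem (s := {x | v x ≤ N}) hx]
    linarith [hdrift x]
  · have hPmin : ∑' y, P x y * min (v y) N ≤ N := by
      simpa using (hP1 x).tsum_mul_le_of_le (hP0 x) hmin0 fun _ => min_le_right _ _
    rw [min_eq_right (le_of_not_ge hx), Set.indicator_of_notMem (s := {x | v x ≤ N}) hx]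
    linarith [hr0 x]

theorem mul_tsum_truncation_le (hP0 : ∀ x y, 0 ≤ P x y) (hP1 : ∀ x, HasSum (P x) 1)
    (hπ0 : ∀ x, 0 ≤ π x) (hπ : Summable π) (hstat : ∀ y, ∑' x, π x * P x y = π y)
    (hv0 : ∀ x, 0 ≤ v x) (hr0 : ∀ x, 0 ≤ r x) (hπr : Summable fun x => π x * r x)
    (hPv : ∀ x, Summable fun y => P x y * v y)
    (hdrift : ∀ x, (∑' y, P x y * v y) - v x ≤ -c * v x + r x) {N : ℝ} (hN : 0 ≤ N) :
    c * ∑' x, π x * {x | v x ≤ N}.indicator v x ≤ ∑' x, π x * r x := by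
  set w : S → ℝ := fun x => min (v x) N
  set h : S → ℝ := {x | v x ≤ N}.indicator v
  have hw0 (x : S) : 0 ≤ w x := le_min (hv0 x) hN
  have hh0 : ∀ x, 0 ≤ h x := Set.indicator_nonneg fun x _ => hv0 x
  have hhN : ∀ x, h x ≤ N := Set.indicator_le' (fun _ hx => hx) fun _ _ => hN
  have hπw : Summable fun x => π x * w x :=
    hπ.mul_of_nonneg_of_le hπ0 hw0 fun _ => min_le_right _ _
  have hπh : Summable fun x => π x * h x := hπ.mul_of_nonneg_of_le hπ0 hh0 hhN
  have hPw (x : S) : 0 ≤ ∑' y, P x y * w y := tsum_nonneg fun y => mul_nonneg (hP0 x y) (hw0 y)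
  have hπPw : Summable fun x => π x * ∑' y, P x y * w y :=
    hπ.mul_of_nonneg_of_le hπ0 hPw fun x => by
      simpa using (hP1 x).tsum_mul_le_of_le (hP0 x) hw0 fun _ => min_le_right _ _
  have key : ∑' x, π x * w x ≤ ∑' x, π x * w x - c * ∑' x, π x * h x + ∑' x, π x * r x :=
    calc ∑' x, π x * w x = ∑' x, π x * ∑' y, P x y * w y :=
          (tsum_mul_tsum_kernel_eq_of_bounded hP0 hP1 hπ0 hπ hstat hw0
            fun _ => min_le_right _ _).symm
      _ ≤ ∑' x, (π x * w x - c * (π x * h x) + π x * r x) :=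
          hπPw.tsum_le_tsum (fun x => by
            have := mul_le_mul_of_nonneg_left
              (tsum_kernel_mul_min_le hP0 hP1 hv0 hr0 hPv hdrift hN x) (hπ0 x)
            linarith)
            ((hπw.sub (hπh.mul_left c)).add hπr)
      _ = _ := by rw [(hπw.sub (hπh.mul_left c)).tsum_add hπr, hπw.tsum_sub (hπh.mul_left c),
            tsum_mul_left]
  linarith

theorem summable_mul_and_tsum_le_of_drift (hP0 : ∀ x y, 0 ≤ P x y)
    (hP1 : ∀ x, HasSum (P x) 1) (hπ0 : ∀ x, 0 ≤ π x) (hπ : Summable π)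
    (hstat : ∀ y, ∑' x, π x * P x y = π y) (hv0 : ∀ x, 0 ≤ v x) (hr0 : ∀ x, 0 ≤ r x)
    (hπr : Summable fun x => π x * r x) (hPv : ∀ x, Summable fun y => P x y * v y)
    (hc : 0 < c) (hdrift : ∀ x, (∑' y, P x y * v y) - v x ≤ -c * v x + r x) :
    Summable (fun x => π x * v x) ∧ ∑' x, π x * v x ≤ (∑' x, π x * r x) / c := by
  have hfinite (F : Finset S) : ∑ x ∈ F, π x * v x ≤ (∑' x, π x * r x) / c := by
    set N := ∑ x ∈ F, v x
    have hvN : ∀ x ∈ F, v x ≤ N := fun x hx => Finset.single_le_sum (fun y _ => hv0 y) hx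
    have hN : 0 ≤ N := Finset.sum_nonneg fun y _ => hv0 y
    have hh0 : ∀ x, 0 ≤ {x | v x ≤ N}.indicator v x := Set.indicator_nonneg fun x _ => hv0 x
    have htrunc : Summable fun x => π x * {x | v x ≤ N}.indicator v x :=
      hπ.mul_of_nonneg_of_le hπ0 hh0 (Set.indicator_le' (fun _ hx => hx) fun _ _ => hN)
    rw [le_div_iff₀' hc]
    calc c * ∑ x ∈ F, π x * v x = c * ∑ x ∈ F, π x * {x | v x ≤ N}.indicator v x := by
          congr 1
          exact Finset.sum_congr rfl fun x hx => by
            rw [Set.indicator_of_mem (s := {x | v x ≤ N}) (hvN x hx)]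
      _ ≤ c * ∑' x, π x * {x | v x ≤ N}.indicator v x :=
          mul_le_mul_of_nonneg_left
            (htrunc.sum_le_tsum F fun x _ => mul_nonneg (hπ0 x) (hh0 x)) hc.le
      _ ≤ ∑' x, π x * r x :=
          mul_tsum_truncation_le hP0 hP1 hπ0 hπ hstat hv0 hr0 hπr hPv hdrift hN
  have hsum : Summable fun x => π x * v x :=
    summable_of_sum_le (fun x => mul_nonneg (hπ0 x) (hv0 x)) hfinite
  exact ⟨hsum, hsum.tsum_le_of_sum_le hfinite⟩

end StationaryDrift

theorem stmt6_general {S : Type*} [DecidableEq S]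
    (P : S → S → ℝ) (hP0 : ∀ x y, 0 ≤ P x y) (hP1 : ∀ x, HasSum (P x) 1)
    (π : S → ℝ) (hπ0 : ∀ x, 0 ≤ π x) (hπ1 : HasSum π 1)
    (hstat : ∀ y, ∑' x, π x * P x y = π y)
    (v : S → ℝ) (hv : ∀ x, 1 ≤ v x)
    (c b : ℝ) (hc : c ∈ Set.Ioo (0 : ℝ) 1) (hb : 0 < b)
    (K : Finset S)
    (hPv : ∀ x, Summable (fun y => P x y * v y))
    (hdrift : ∀ x, (∑' y, P x y * v y) - v x ≤ -c * v x + b * (if x ∈ K then 1 else 0)) :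
    Summable (fun x => π x * v x) ∧ ∑' x, π x * v x ≤ b / c := by
  have hv0 (x : S) : 0 ≤ v x := zero_le_one.trans (hv x)
  have hK0 (x : S) : 0 ≤ b * (if x ∈ K then 1 else 0) := by split_ifs <;> simp [hb.le]
  have hKb (x : S) : b * (if x ∈ K then 1 else 0) ≤ b := by split_ifs <;> simp [hb.le]
  have hπK : ∑' x, π x * (b * if x ∈ K then 1 else 0) ≤ b := by
    simpa using hπ1.tsum_mul_le_of_le hπ0 hK0 hKb
  obtain ⟨hsum, hle⟩ := summable_mul_and_tsum_le_of_drift hP0 hP1 hπ0 hπ1.summable hstat hv0 hK0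
    (hπ1.summable.mul_of_nonneg_of_le hπ0 hK0 hKb) hPv hc.1 hdrift
  exact ⟨hsum, hle.trans (div_le_div_of_nonneg_right hπK hc.1.le)⟩

theorem stmt6 {S : Type*} [Countable S] [DecidableEq S]
    (P : S → S → ℝ) (hP0 : ∀ x y, 0 ≤ P x y) (hP1 : ∀ x, HasSum (P x) 1)
    (π : S → ℝ) (hπ0 : ∀ x, 0 ≤ π x) (hπ1 : HasSum π 1)
    (hstat : ∀ y, ∑' x, π x * P x y = π y)
    (v : S → ℝ) (hv : ∀ x, 1 ≤ v x)
    (c b : ℝ) (hc : c ∈ Set.Ioo (0 : ℝ) 1) (hb : 0 < b)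
    (K : Finset S)
    (hPv : ∀ x, Summable (fun y => P x y * v y))
    (hdrift : ∀ x, (∑' y, P x y * v y) - v x ≤ -c * v x + b * (if x ∈ K then 1 else 0)) :
    Summable (fun x => π x * v x) ∧ ∑' x, π x * v x ≤ b / c :=
  stmt6_general P hP0 hP1 π hπ0 hπ1 hstat v hv c b hc hb K hPv hdrift
end

section
/- Consider the 2D reflecting random walk with transition kernel P on ℤ₊² defined by bounded increments: from a state n in region A ∈ {∅,{1},{2},{1,2}} the chain jumps by a random increment X^A with law p^A supported on U^A. Fix θ = (θ1,θ2) with θ1 > 0, θ2 > 0 such that the moment generating functions satisfy γ^{{1}}(θ) < 1, γ^{{2}}(θ) < 1, γ^{E}(θ) < 1. Set c = 1 − max(γ^{{1}}(θ), γ^{{2}}(θ), γ^{E}(θ)) ∈ (0,1), v(n) = c⁻¹·exp(⟨θ,n⟩), and b = 1 + c⁻¹(γ^∅(θ) − 1). Then b > 0 and (Pv)(n) − v(n) ≤ −c·v(n) + b·1_{{(0,0)}}(n) for all n ∈ ℤ₊². -/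
/-!
The function `v = c⁻¹ exp⟨θ, ·⟩` is an eigenfunction of each translation-invariant piece
of the kernel: summing `v (n + m)` against `p^A` multiplies `v n` by `γ^A(θ)`. Away from
the origin this factor is at most `1 - c`, which is the drift `-c v`. At the origin
`v (0,0) = c⁻¹`, and the excess `c⁻¹ (γ^∅(θ) - 1) + 1` is exactly `b`, which is at least
`1` because all increments out of the origin have nonnegative coordinates.
-/

/-- Moment generating function of an increment distribution `p` supported on `U`. -/
noncomputable def mgf2 (p : ℤ × ℤ → ℝ) (U : Finset (ℤ × ℤ)) (θ1 θ2 : ℝ) : ℝ :=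
  ∑ m ∈ U, p m * Real.exp (θ1 * (m.1 : ℝ) + θ2 * (m.2 : ℝ))

def U0 : Finset (ℤ × ℤ) := ({0, 1} : Finset ℤ) ×ˢ ({0, 1} : Finset ℤ)
def U1 : Finset (ℤ × ℤ) := ({-1, 0, 1} : Finset ℤ) ×ˢ ({0, 1} : Finset ℤ)
def U2 : Finset (ℤ × ℤ) := ({0, 1} : Finset ℤ) ×ˢ ({-1, 0, 1} : Finset ℤ)
def UE : Finset (ℤ × ℤ) := ({-1, 0, 1} : Finset ℤ) ×ˢ ({-1, 0, 1} : Finset ℤ)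

theorem sum_mul_shift_eq_mgf2_mul {K θ1 θ2 : ℝ} {v : ℤ × ℤ → ℝ}
    (hv : ∀ n : ℤ × ℤ, v n = K * Real.exp (θ1 * (n.1 : ℝ) + θ2 * (n.2 : ℝ)))
    (p : ℤ × ℤ → ℝ) (U : Finset (ℤ × ℤ)) (n : ℤ × ℤ) :
    ∑ m ∈ U, p m * v (n + m) = mgf2 p U θ1 θ2 * v n := by
  rw [mgf2, Finset.sum_mul]
  refine Finset.sum_congr rfl fun m _ => ?_
  simp only [hv, Prod.fst_add, Prod.snd_add, Int.cast_add]
  rw [show θ1 * ((n.1 : ℝ) + m.1) + θ2 * ((n.2 : ℝ) + m.2)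
      = (θ1 * m.1 + θ2 * m.2) + (θ1 * n.1 + θ2 * n.2) by ring, Real.exp_add]
  ring

theorem one_le_mgf2 {p : ℤ × ℤ → ℝ} {U : Finset (ℤ × ℤ)} {θ1 θ2 : ℝ}
    (hθ1 : 0 ≤ θ1) (hθ2 : 0 ≤ θ2) (hp : ∀ m, 0 ≤ p m) (hsum : ∑ m ∈ U, p m = 1)
    (hU : ∀ m ∈ U, 0 ≤ m.1 ∧ 0 ≤ m.2) :
    1 ≤ mgf2 p U θ1 θ2 := by
  rw [← hsum, mgf2]
  refine Finset.sum_le_sum fun m hm => ?_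
  have hm1 : (0 : ℝ) ≤ m.1 := mod_cast (hU m hm).1
  have hm2 : (0 : ℝ) ≤ m.2 := mod_cast (hU m hm).2
  have hexp : 1 ≤ Real.exp (θ1 * m.1 + θ2 * m.2) := Real.one_le_exp (by positivity)
  nlinarith [hp m]

theorem nonneg_of_mem_U0 {m : ℤ × ℤ} (hm : m ∈ U0) : 0 ≤ m.1 ∧ 0 ≤ m.2 := by
  simp only [U0, Finset.mem_product, Finset.mem_insert, Finset.mem_singleton] at hm
  omega

theorem mul_sub_self_le_neg_mul {γ c x : ℝ} (hγ : γ ≤ 1 - c) (hx : 0 ≤ x) :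
    γ * x - x ≤ -c * x := by
  nlinarith

theorem stmt7_general (p0 p1 p2 pE : ℤ × ℤ → ℝ)
    (h0nn : ∀ m, 0 ≤ p0 m) (h0sum : ∑ m ∈ U0, p0 m = 1)
    (θ1 θ2 : ℝ) (hθ1 : 0 < θ1) (hθ2 : 0 < θ2)
    (hγ1 : mgf2 p1 U1 θ1 θ2 < 1) (hγ2 : mgf2 p2 U2 θ1 θ2 < 1)
    (hγE : mgf2 pE UE θ1 θ2 < 1)
    (c : ℝ)
    (hc : c = 1 - max (mgf2 p1 U1 θ1 θ2) (max (mgf2 p2 U2 θ1 θ2) (mgf2 pE UE θ1 θ2)))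
    (v : ℤ × ℤ → ℝ) (hv : ∀ n : ℤ × ℤ, v n = c⁻¹ * Real.exp (θ1 * (n.1 : ℝ) + θ2 * (n.2 : ℝ)))
    (b : ℝ) (hb : b = 1 + c⁻¹ * (mgf2 p0 U0 θ1 θ2 - 1)) :
    0 < b ∧ ∀ n : ℤ × ℤ, 0 ≤ n.1 → 0 ≤ n.2 →
      (if n = (0, 0) then ∑ m ∈ U0, p0 m * v (n + m)
       else if n.2 = 0 then ∑ m ∈ U1, p1 m * v (n + m)
       else if n.1 = 0 then ∑ m ∈ U2, p2 m * v (n + m)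
       else ∑ m ∈ UE, pE m * v (n + m)) - v n
      ≤ -c * v n + b * (if n = (0, 0) then 1 else 0) := by
  have hc_pos : 0 < c := by rw [hc]; linarith [max_lt hγ1 (max_lt hγ2 hγE)]
  have hγ0 : 1 ≤ mgf2 p0 U0 θ1 θ2 :=
    one_le_mgf2 hθ1.le hθ2.le h0nn h0sum fun _ => nonneg_of_mem_U0
  have hv_nonneg : ∀ n, 0 ≤ v n := fun n => by rw [hv]; positivity
  have hshift := sum_mul_shift_eq_mgf2_mul hv
  have hb_pos : 0 < b := by
    rw [hb]
    linarith [mul_nonneg (inv_nonneg.mpr hc_pos.le) (sub_nonneg.mpr hγ0)]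
  refine ⟨hb_pos, fun n _ _ => ?_⟩
  split_ifs with h0
  · subst h0
    rw [hshift, hv, hb]
    field_simp
    simp
  all_goals
    rw [hshift, mul_zero, add_zero]
    refine mul_sub_self_le_neg_mul ?_ (hv_nonneg n)
    rw [hc]
    simp only [sub_sub_cancel, le_max_iff, le_refl, true_or, or_true]

theorem stmt7 (p0 p1 p2 pE : ℤ × ℤ → ℝ)
    (h0nn : ∀ m, 0 ≤ p0 m) (h0sum : ∑ m ∈ U0, p0 m = 1)
    (h1nn : ∀ m, 0 ≤ p1 m) (h1sum : ∑ m ∈ U1, p1 m = 1)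
    (h2nn : ∀ m, 0 ≤ p2 m) (h2sum : ∑ m ∈ U2, p2 m = 1)
    (hEnn : ∀ m, 0 ≤ pE m) (hEsum : ∑ m ∈ UE, pE m = 1)
    (θ1 θ2 : ℝ) (hθ1 : 0 < θ1) (hθ2 : 0 < θ2)
    (hγ1 : mgf2 p1 U1 θ1 θ2 < 1) (hγ2 : mgf2 p2 U2 θ1 θ2 < 1)
    (hγE : mgf2 pE UE θ1 θ2 < 1)
    (c : ℝ)
    (hc : c = 1 - max (mgf2 p1 U1 θ1 θ2) (max (mgf2 p2 U2 θ1 θ2) (mgf2 pE UE θ1 θ2)))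
    (v : ℤ × ℤ → ℝ) (hv : ∀ n : ℤ × ℤ, v n = c⁻¹ * Real.exp (θ1 * (n.1 : ℝ) + θ2 * (n.2 : ℝ)))
    (b : ℝ) (hb : b = 1 + c⁻¹ * (mgf2 p0 U0 θ1 θ2 - 1)) :
    0 < b ∧ ∀ n : ℤ × ℤ, 0 ≤ n.1 → 0 ≤ n.2 →
      (if n = (0, 0) then ∑ m ∈ U0, p0 m * v (n + m)
       else if n.2 = 0 then ∑ m ∈ U1, p1 m * v (n + m)
       else if n.1 = 0 then ∑ m ∈ U2, p2 m * v (n + m)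
       else ∑ m ∈ UE, pE m * v (n + m)) - v n
      ≤ -c * v n + b * (if n = (0, 0) then 1 else 0) :=
  stmt7_general p0 p1 p2 pE h0nn h0sum θ1 θ2 hθ1 hθ2 hγ1 hγ2 hγE c hc v hv b hb
end

section
/- Consider the two-node Jackson network with cooperative servers with parameters λ1, λ2 > 0, σ1, σ2 > 0, q1, q2 ∈ (0,1), normalized so λ1 + λ2 + σ1 + σ2 = 1. Define the mean drifts μ^{{1}} = (λ1 − σ1 − σ2, λ2 + (σ1+σ2)q1) and μ^{{2}} = (λ1 + (σ1+σ2)q2, λ2 − σ1 − σ2). If the stability condition ρ1 = (λ1 + λ2 q2)/(σ1(1 − q1 q2)) < 1 and ρ2 = (λ2 + λ1 q1)/(σ2(1 − q1 q2)) < 1 holds, then μ1^{{1}} < 0, μ2^{{2}} < 0, and μ1^{{1}}·μ2^{{2}} − μ2^{{1}}·μ1^{{2}} > 0. -/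
theorem stmt16 (lam1 lam2 sig1 sig2 q1 q2 : ℝ)
    (hl1 : 0 < lam1) (hl2 : 0 < lam2) (hs1 : 0 < sig1) (hs2 : 0 < sig2)
    (hq1 : q1 ∈ Set.Ioo (0 : ℝ) 1) (hq2 : q2 ∈ Set.Ioo (0 : ℝ) 1)
    (hnorm : lam1 + lam2 + sig1 + sig2 = 1)
    (hρ1 : (lam1 + lam2 * q2) / (sig1 * (1 - q1 * q2)) < 1)
    (hρ2 : (lam2 + lam1 * q1) / (sig2 * (1 - q1 * q2)) < 1) :
    lam1 - sig1 - sig2 < 0 ∧ lam2 - sig1 - sig2 < 0 ∧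
    (lam1 - sig1 - sig2) * (lam2 - sig1 - sig2)
      - (lam2 + (sig1 + sig2) * q1) * (lam1 + (sig1 + sig2) * q2) > 0 := by
  obtain ⟨hq1a, hq1b⟩ := hq1
  obtain ⟨hq2a, hq2b⟩ := hq2
  have hD : 0 < 1 - q1 * q2 := by nlinarith
  have h1 : lam1 + lam2 * q2 < sig1 * (1 - q1 * q2) :=
    (div_lt_one (by positivity)).mp hρ1
  have h2 : lam2 + lam1 * q1 < sig2 * (1 - q1 * q2) :=
    (div_lt_one (by positivity)).mp hρ2
  refine ⟨by nlinarith, by nlinarith, ?_⟩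
  nlinarith [mul_pos hl2 hq2a, mul_pos hl1 hq1a,
    mul_pos (add_pos hs1 hs2) hD, sq_nonneg (sig1 + sig2)]
end
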